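/- Let 𝒜 be a family of finite subsets of ω₁ closed under subsets and containing all singletons such that any finite set all of whose two-element subsets lie in 𝒜 is in 𝒜. Suppose that for every uncountable pairwise disjoint family of finite subsets of ω₁ there are two distinct members A, B with A ⊗ B ⊆ 𝒜. Then for every uncountable family {B_ξ : ξ < ω₁} of pairwise disjoint sets in 𝒜, there is an infinite set X ⊆ ω₁ such that every finite subset of ⋃_{ξ∈X} B_ξ belongs to 𝒜. -/

import Mathlib

noncomputable section

/-- The set `ω₁` of countable ordinals, as a type. -/
abbrev Omega1 : Type := (Ordinal.omega 1).ToType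

/-- `‖x‖_𝒜 = sup_{A ∈ 𝒜} sqrt (Σ_{α ∈ A} x(α)²)`. -/
def normA (𝒜 : Set (Finset Omega1)) (x : Omega1 → ℝ) : ℝ :=
  sSup {r : ℝ | ∃ A ∈ 𝒜, r = Real.sqrt (∑ α ∈ A, (x α) ^ 2)}

/-- The supremum norm of `x`. -/
def supNorm (x : Omega1 → ℝ) : ℝ :=
  sSup {r : ℝ | ∃ α : Omega1, r = |x α|}

/-- The ℓ₂ norm of a (finitely supported) `x`. -/
def l2Norm (x : Omega1 → ℝ) : ℝ :=
  Real.sqrt (∑ᶠ α : Omega1, (x α) ^ 2)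

/-- `𝒜` is a family of finite subsets of `ω₁` closed under subsets
and containing all singletons. -/
def IsGoodFamily (𝒜 : Set (Finset Omega1)) : Prop :=
  (∀ A ∈ 𝒜, ∀ B : Finset Omega1, B ⊆ A → B ∈ 𝒜) ∧
    ∀ α : Omega1, ({α} : Finset Omega1) ∈ 𝒜

/-!
Join two indices `ξ ≠ η` by an edge when `B ξ ⊗ B η ⊆ 𝒜`. The crossing hypothesis, applied to the
injective disjoint family of nonempty `B ξ`, says that this graph on `ω₁` has no uncountable
independent set, so by the Erdős–Dushnik–Miller partition relation `ω₁ → (ω₁, ω)²` it has an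
infinite clique `X`. Every pair of points of `⋃_{ξ ∈ X} B ξ` then lies in `𝒜`, and `𝒜` is
generated by its pairs.
-/

open Set

namespace SimpleGraph

variable {V : Type*} (G : SimpleGraph V)

theorem exists_not_countable_neighborSet_inter (hind : ∀ I, G.IsIndepSet I → I.Countable)
    {S : Set V} (hS : ¬S.Countable) : ∃ v ∈ S, ¬(G.neighborSet v ∩ S).Countable := by
  by_contra! hcount
  -- a maximal independent `I ⊆ S` is countable, and maximality covers `S` by `I` and the
  -- neighbourhoods of its points
  obtain ⟨I, -, hI⟩ := zorn_subset_nonempty {I | I ⊆ S ∧ G.IsIndepSet I}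
    (fun c hcS hc _ => ⟨⋃₀ c, ⟨sUnion_subset fun s hs => (hcS hs).1,
      hc.pairwise_sUnion.2 fun s hs => (hcS hs).2⟩, fun _ => subset_sUnion_of_mem⟩)
    ∅ ⟨empty_subset _, pairwise_empty _⟩
  have hIc := hind I hI.prop.2
  refine hS (((hIc.biUnion fun u hu => hcount u (hI.prop.1 hu)).union hIc).mono fun w hw => ?_)
  by_cases hwI : w ∈ I
  · exact Or.inr hwI
  obtain ⟨u, hu, huw⟩ : ∃ u ∈ I, G.Adj u w := by
    by_contra! hnadj
    refine hwI (hI.2 ⟨insert_subset hw hI.prop.1, hI.prop.2.insert fun u hu _ => ?_⟩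
      (subset_insert w I) (mem_insert w I))
    exact ⟨fun h => hnadj u hu h.symm, hnadj u hu⟩
  exact Or.inl (mem_biUnion hu ⟨huw, hw⟩)

theorem exists_isClique_infinite [Uncountable V] (hind : ∀ I, G.IsIndepSet I → I.Countable) :
    ∃ X : Set V, X.Infinite ∧ G.IsClique X := by
  have := fun (S : Set V) (hS : ¬S.Countable) => G.exists_not_countable_neighborSet_inter hind hS
  choose! pick hpickS hpick using this
  set T : ℕ → Set V := fun n => (fun S => G.neighborSet (pick S) ∩ S)^[n] univ
  have hT_succ : ∀ n, T (n + 1) = G.neighborSet (pick (T n)) ∩ T n := fun n =>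
    Function.iterate_succ_apply' _ _ _
  have hT : ∀ n, ¬(T n).Countable := by
    intro n
    induction n with
    | zero => exact not_countable_univ
    | succ n ih => rw [hT_succ]; exact hpick _ ih
  have hT_anti : Antitone T := antitone_nat_of_succ_le fun n => by
    rw [hT_succ]; exact inter_subset_right
  have hadj : ∀ {m n}, m < n → G.Adj (pick (T m)) (pick (T n)) := fun {m n} h => by
    have := hT_anti (Nat.succ_le_of_lt h) (hpickS _ (hT n))
    rw [hT_succ] at this
    exact this.1
  have hinj : Function.Injective fun n => pick (T n) := by
    intro m n h
    by_contra hne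
    rcases lt_or_gt_of_ne hne with hlt | hlt
    · exact (hadj hlt).ne h
    · exact (hadj hlt).ne h.symm
  refine ⟨range fun n => pick (T n), infinite_range_of_injective hinj, ?_⟩
  rintro _ ⟨m, rfl⟩ _ ⟨n, rfl⟩ hne
  rcases lt_or_gt_of_ne (ne_of_apply_ne (fun n => pick (T n)) hne) with hlt | hlt
  · exact hadj hlt
  · exact (hadj hlt).symm

end SimpleGraph

open Cardinal

theorem Omega1.mk_eq_aleph_one : #Omega1 = ℵ₁ := by
  rw [mk_toType, Ordinal.card_omega]

instance : Uncountable Omega1 := by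
  rw [← aleph0_lt_mk_iff, Omega1.mk_eq_aleph_one]
  exact aleph0_lt_aleph_one

theorem Omega1.nonempty_embedding_of_not_countable {α : Type*} {S : Set α} (hS : ¬S.Countable) :
    Nonempty (Omega1 ↪ S) := by
  rw [← lift_mk_le', Omega1.mk_eq_aleph_one, lift_aleph, Ordinal.lift_one, aleph_one_le_iff,
    aleph0_lt_lift]
  exact lt_of_not_ge (mt le_aleph0_iff_set_countable.1 hS)

def crossGraph (𝒜 : Set (Finset Omega1)) (B : Omega1 → Finset Omega1) : SimpleGraph Omega1 :=
  SimpleGraph.fromRel fun ξ η => ∀ α ∈ B ξ, ∀ β ∈ B η, ({α, β} : Finset Omega1) ∈ 𝒜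

theorem countable_of_isIndepSet_crossGraph {𝒜 : Set (Finset Omega1)}
    (hcross : ∀ F : Omega1 → Finset Omega1, Function.Injective F →
      (∀ ξ η : Omega1, ξ ≠ η → Disjoint (F ξ) (F η)) →
      ∃ ξ η : Omega1, ξ ≠ η ∧ ∀ α ∈ F ξ, ∀ β ∈ F η, ({α, β} : Finset Omega1) ∈ 𝒜)
    {B : Omega1 → Finset Omega1} (hBdisj : ∀ ξ η : Omega1, ξ ≠ η → Disjoint (B ξ) (B η))
    {I : Set Omega1} (hI : (crossGraph 𝒜 B).IsIndepSet I) : I.Countable := by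
  by_contra hIc
  -- `B ξ = ∅` makes `ξ` adjacent to every other vertex
  have hempty : {ξ ∈ I | B ξ = ∅}.Subsingleton := fun ξ hξ η hη => by
    by_contra hne
    exact hI hξ.1 hη.1 hne ⟨hne, Or.inl fun α hα => by simp [hξ.2] at hα⟩
  have hJ : ¬{ξ ∈ I | (B ξ).Nonempty}.Countable := fun hJ =>
    hIc ((hJ.union hempty.countable).mono fun ξ hξ =>
      (B ξ).eq_empty_or_nonempty.elim (fun h => Or.inr ⟨hξ, h⟩) fun h => Or.inl ⟨hξ, h⟩)
  obtain ⟨e⟩ := Omega1.nonempty_embedding_of_not_countable hJ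
  have hdisj : ∀ ξ η, ξ ≠ η → Disjoint (B (e ξ)) (B (e η)) := fun ξ η hne =>
    hBdisj _ _ (Subtype.coe_injective.ne (e.injective.ne hne))
  obtain ⟨ξ, η, hne, hpairs⟩ := hcross (fun ξ => B (e ξ)) (fun ξ η h => by
    by_contra hne
    exact (e η).2.2.ne_empty (disjoint_self.1 (by simpa only [h] using hdisj ξ η hne))) hdisj
  have hne' : (e ξ : Omega1) ≠ e η := Subtype.coe_injective.ne (e.injective.ne hne)
  exact hI (e ξ).2.1 (e η).2.1 hne' ⟨hne', Or.inl hpairs⟩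

theorem pair_mem_of_isClique_crossGraph {𝒜 : Set (Finset Omega1)}
    (h𝒜 : ∀ A ∈ 𝒜, ∀ B : Finset Omega1, B ⊆ A → B ∈ 𝒜) {B : Omega1 → Finset Omega1}
    (hBA : ∀ ξ, B ξ ∈ 𝒜) {X : Set Omega1} (hX : (crossGraph 𝒜 B).IsClique X) {α β : Omega1}
    (hα : α ∈ ⋃ ξ ∈ X, (↑(B ξ) : Set Omega1)) (hβ : β ∈ ⋃ ξ ∈ X, (↑(B ξ) : Set Omega1)) :
    ({α, β} : Finset Omega1) ∈ 𝒜 := by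
  simp only [mem_iUnion₂, Finset.mem_coe] at hα hβ
  obtain ⟨ξ, hξ, hαξ⟩ := hα
  obtain ⟨η, hη, hβη⟩ := hβ
  obtain rfl | hne := eq_or_ne ξ η
  · exact h𝒜 _ (hBA ξ) _ (Finset.insert_subset hαξ (Finset.singleton_subset_iff.2 hβη))
  obtain ⟨-, h | h⟩ := hX hξ hη hne
  · exact h α hαξ β hβη
  · exact Finset.pair_comm α β ▸ h β hβη α hαξ

/-- from pairwise disjoint sets `B ξ ∈ 𝒜` one can extract an
infinite `X` with all finite subsets of `⋃_{ξ ∈ X} B ξ` in `𝒜`. -/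
theorem stmt18 (𝒜 : Set (Finset Omega1)) (h𝒜 : IsGoodFamily 𝒜)
    (h2gen : ∀ C : Finset Omega1,
      (∀ α ∈ C, ∀ β ∈ C, α ≠ β → ({α, β} : Finset Omega1) ∈ 𝒜) → C ∈ 𝒜)
    (hcross : ∀ F : Omega1 → Finset Omega1, Function.Injective F →
      (∀ ξ η : Omega1, ξ ≠ η → Disjoint (F ξ) (F η)) →
      ∃ ξ η : Omega1, ξ ≠ η ∧
        ∀ α ∈ F ξ, ∀ β ∈ F η, ({α, β} : Finset Omega1) ∈ 𝒜)
    (B : Omega1 → Finset Omega1)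
    (hBdisj : ∀ ξ η : Omega1, ξ ≠ η → Disjoint (B ξ) (B η))
    (hBA : ∀ ξ, B ξ ∈ 𝒜) :
    ∃ X : Set Omega1, X.Infinite ∧
      ∀ s : Finset Omega1,
        (↑s : Set Omega1) ⊆ (⋃ ξ ∈ X, (↑(B ξ) : Set Omega1)) → s ∈ 𝒜 := by
  obtain ⟨X, hXinf, hX⟩ := (crossGraph 𝒜 B).exists_isClique_infinite fun _ hI =>
    countable_of_isIndepSet_crossGraph hcross hBdisj hI
  exact ⟨X, hXinf, fun s hs => h2gen s fun α hα β hβ _ =>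
    pair_mem_of_isClique_crossGraph h𝒜.1 hBA hX (hs hα) (hs hβ)⟩

end
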